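/- arXiv:1508.03349 — 5 statements merged into one kernel-verified Lean document; each statement's English description precedes it below -/
import Mathlib

section
/- If the moment generating function M(t) = E[e^{tX}] of a random variable X is finite on a neighborhood (−t₀, t₀) of 0 and a > E[X], then inf_{t>0}(log M(t) − t·a) < 0. -/
open MeasureTheory Real Filter Topology ProbabilityTheory

theorem HasDerivAt.eventually_lt_right_of_neg {f : ℝ → ℝ} {f' x : ℝ} (hf : HasDerivAt f f' x)
    (hf' : f' < 0) : ∀ᶠ t in 𝓝[>] 0, f (x + t) < f x := by
  filter_upwards [hf.tendsto_slope_zero_right.eventually (gt_mem_nhds hf'), self_mem_nhdsWithin]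
    with t hslope (ht : 0 < t)
  rw [smul_eq_mul, inv_mul_lt_iff₀ ht, mul_zero, sub_neg] at hslope
  exact hslope

theorem ProbabilityTheory.hasDerivAt_cgf_zero {Ω : Type*} [MeasurableSpace Ω] {μ : Measure Ω}
    [IsProbabilityMeasure μ] {X : Ω → ℝ} (h : 0 ∈ interior (integrableExpSet X μ)) :
    HasDerivAt (cgf X μ) μ[X] 0 := by
  simpa [deriv_cgf_zero h] using (analyticAt_cgf h).differentiableAt.hasDerivAt

theorem covering_stmt4_general
    {Ω : Type*} [MeasurableSpace Ω] (μ : Measure Ω) [IsProbabilityMeasure μ]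
    (X : Ω → ℝ) (a : ℝ)
    (t₀ : ℝ) (ht₀ : 0 < t₀)
    (hmgf : ∀ t : ℝ, |t| < t₀ → Integrable (fun ω => exp (t * X ω)) μ)
    (ha : ∫ ω, X ω ∂μ < a) :
    ∃ t : ℝ, 0 < t ∧ Integrable (fun ω => exp (t * X ω)) μ ∧
      Real.log (∫ ω, exp (t * X ω) ∂μ) - t * a < 0 := by
  have h0 : 0 ∈ interior (integrableExpSet X μ) :=
    mem_interior.2 ⟨Set.Ioo (-t₀) t₀, fun t ht ↦ hmgf t (abs_lt.2 ht), isOpen_Ioo,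
      by simpa using ht₀⟩
  have hderiv : HasDerivAt (fun t ↦ cgf X μ t - t * a) (μ[X] - a) 0 :=
    (hasDerivAt_cgf_zero h0).sub (hasDerivAt_mul_const a)
  obtain ⟨t, hdecr, ht, ht_lt⟩ := ((hderiv.eventually_lt_right_of_neg (sub_neg.2 ha)).and
    (Ioo_mem_nhdsGT ht₀)).exists
  refine ⟨t, ht, hmgf t (abs_lt.2 ⟨by linarith, ht_lt⟩), ?_⟩
  simpa [cgf_zero, cgf, mgf] using hdecr

/-- **Negativity of the Chernoff exponent.** If the moment generating function
`M(t) = E[e^{tX}]` is finite on a neighborhood `(−t₀, t₀)` of `0` and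
`a > E[X]`, then `inf_{t>0}(log M(t) − t·a) < 0`; i.e. the infimum is attained
below zero: there is `t > 0` (with `M(t)` finite) such that
`log M(t) − t·a < 0`. -/
theorem covering_stmt4
    {Ω : Type*} [MeasurableSpace Ω] (μ : Measure Ω) [IsProbabilityMeasure μ]
    (X : Ω → ℝ) (hmeas : Measurable X) (a : ℝ)
    (t₀ : ℝ) (ht₀ : 0 < t₀)
    (hmgf : ∀ t : ℝ, |t| < t₀ → Integrable (fun ω => exp (t * X ω)) μ)
    (hint : Integrable X μ)
    (ha : ∫ ω, X ω ∂μ < a) :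
    ∃ t : ℝ, 0 < t ∧ Integrable (fun ω => exp (t * X ω)) μ ∧
      Real.log (∫ ω, exp (t * X ω) ∂μ) - t * a < 0 :=
  covering_stmt4_general μ X a t₀ ht₀ hmgf ha
end

section
/- If X₁, …, Xₙ are i.i.d. copies of X with MGF finite near 0 and a > E[X], then there exists I > 0 such that P(∑_{i=1}^n Xᵢ ≥ n·a) ≤ e^{−nI} for all n; in particular P((1/n)∑ Xᵢ ≥ a) → 0 exponentially fast. -/
open MeasureTheory Real ProbabilityTheory Topology

/-! Since the cumulant generating function `Λ = log M` satisfies `Λ(0) = 0` and `Λ'(0) = E[X] < a`,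
some `t > 0` in the domain of `M` has `Λ(t) < t a`. The Chernoff bound at this `t`, together with
`Λ_{X₁ + ⋯ + Xₙ} = n Λ` for i.i.d. summands, gives the rate `I = t a - Λ(t)`. -/

lemma HasDerivAt.eventually_nhdsGT_lt_of_neg {g : ℝ → ℝ} {g' x : ℝ} (hg : HasDerivAt g g' x)
    (hg' : g' < 0) : ∀ᶠ z in 𝓝[>] x, g z < g x := by
  filter_upwards [hg.hasDerivWithinAt.limsup_slope_le' (lt_irrefl x) hg', self_mem_nhdsWithin]
    with z hslope hz
  rw [slope_def_field, div_lt_iff₀ (sub_pos.2 hz)] at hslope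
  linarith

namespace ProbabilityTheory

variable {Ω : Type*} [MeasurableSpace Ω] {μ : Measure Ω}

lemma zero_mem_interior_integrableExpSet {X : Ω → ℝ} {t₀ : ℝ} (ht₀ : 0 < t₀)
    (h : ∀ t : ℝ, |t| < t₀ → Integrable (fun ω => exp (t * X ω)) μ) :
    0 ∈ interior (integrableExpSet X μ) :=
  mem_interior.2 ⟨Metric.ball 0 t₀, fun t ht => h t (by simpa using ht), Metric.isOpen_ball,
    Metric.mem_ball_self ht₀⟩

lemma hasDerivAt_cgf_zero_s6 [IsProbabilityMeasure μ] {X : Ω → ℝ}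
    (h : 0 ∈ interior (integrableExpSet X μ)) : HasDerivAt (cgf X μ) μ[X] 0 := by
  have hderiv := (analyticAt_cgf h).differentiableAt.hasDerivAt
  rwa [deriv_cgf_zero h, probReal_univ, div_one] at hderiv

lemma eventually_cgf_lt_mul [IsProbabilityMeasure μ] {X : Ω → ℝ}
    (h : 0 ∈ interior (integrableExpSet X μ)) {a : ℝ} (ha : μ[X] < a) :
    ∀ᶠ t in 𝓝[>] 0, cgf X μ t < t * a := by
  have hderiv := (hasDerivAt_cgf_zero_s6 h).sub ((hasDerivAt_id (0 : ℝ)).mul_const a)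
  filter_upwards [hderiv.eventually_nhdsGT_lt_of_neg (by simpa using ha)] with t ht
  simpa [cgf_zero] using ht

lemma measureReal_sum_ge_le_exp_of_identDistrib {ι : Type*} {X : ι → Ω → ℝ} {j : ι}
    (hmeas : ∀ i, Measurable (X i)) (hindep : iIndepFun X μ)
    (hident : ∀ i, IdentDistrib (X i) (X j) μ μ) {t : ℝ} (ht : 0 ≤ t)
    (hint : Integrable (fun ω => exp (t * X j ω)) μ) (s : Finset ι) (a : ℝ) :
    μ.real {ω | (s.card : ℝ) * a ≤ ∑ i ∈ s, X i ω} ≤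
      exp (-(s.card : ℝ) * (t * a - cgf (X j) μ t)) := by
  have : IsProbabilityMeasure μ := hindep.isProbabilityMeasure
  have hint_i : ∀ i ∈ s, Integrable (fun ω => exp (t * X i ω)) μ :=
    fun i _ => ((hident i).comp (measurable_const_mul t).exp).integrable_iff.2 hint
  have hcgf_i i : cgf (X i) μ t = cgf (X j) μ t := by
    simp only [cgf, mgf_congr_of_identDistrib _ _ (hident i)]
  have hcgf_sum : cgf (∑ i ∈ s, X i) μ t = s.card * cgf (X j) μ t := by
    simp only [hindep.cgf_sum hmeas hint_i, hcgf_i, Finset.sum_const, nsmul_eq_mul]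
  calc μ.real {ω | (s.card : ℝ) * a ≤ ∑ i ∈ s, X i ω}
      = μ.real {ω | (s.card : ℝ) * a ≤ (∑ i ∈ s, X i) ω} := by simp only [Finset.sum_apply]
    _ ≤ exp (-t * (s.card * a) + cgf (∑ i ∈ s, X i) μ t) :=
        measure_ge_le_exp_cgf _ ht (hindep.integrable_exp_mul_sum hmeas hint_i)
    _ = exp (-(s.card : ℝ) * (t * a - cgf (X j) μ t)) := by rw [hcgf_sum]; ring_nf

end ProbabilityTheory

theorem covering_stmt6_general
    {Ω : Type*} [MeasurableSpace Ω] (μ : Measure Ω) [IsProbabilityMeasure μ]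
    (X : ℕ → Ω → ℝ)
    (hmeas : ∀ i, Measurable (X i))
    (hindep : iIndepFun X μ)
    (hident : ∀ i, IdentDistrib (X i) (X 0) μ μ)
    (t₀ : ℝ) (ht₀ : 0 < t₀)
    (hmgf : ∀ t : ℝ, |t| < t₀ → Integrable (fun ω => exp (t * X 0 ω)) μ)
    (a : ℝ) (ha : ∫ ω, X 0 ω ∂μ < a) :
    ∃ I : ℝ, 0 < I ∧ ∀ n : ℕ,
      (μ {ω | (n : ℝ) * a ≤ ∑ i ∈ Finset.range n, X i ω}).toReal ≤
        exp (-(n : ℝ) * I) := by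
  have h0 := zero_mem_interior_integrableExpSet ht₀ hmgf
  obtain ⟨t, ⟨hcgf, ht_lt⟩, ht_pos : 0 < t⟩ := ((eventually_cgf_lt_mul h0 ha).and
    ((eventually_lt_nhds ht₀).filter_mono nhdsWithin_le_nhds)
    |>.and self_mem_nhdsWithin).exists
  refine ⟨t * a - cgf (X 0) μ t, by linarith, fun n => ?_⟩
  have hbound := measureReal_sum_ge_le_exp_of_identDistrib hmeas hindep hident (le_of_lt ht_pos)
    (hmgf t (by rwa [abs_of_pos ht_pos])) (Finset.range n) a
  rwa [Finset.card_range] at hbound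

/-- **Exponential decay of the upper tail of i.i.d. averages.** If `X₀, X₁, …`
are i.i.d. with moment generating function finite near `0` and `a > E[X]`,
then there is `I > 0` with `P(∑_{i<n} Xᵢ ≥ n·a) ≤ e^{−nI}` for all `n`;
in particular `P((1/n)∑ Xᵢ ≥ a) → 0` exponentially fast. -/
theorem covering_stmt6
    {Ω : Type*} [MeasurableSpace Ω] (μ : Measure Ω) [IsProbabilityMeasure μ]
    (X : ℕ → Ω → ℝ)
    (hmeas : ∀ i, Measurable (X i))
    (hindep : iIndepFun X μ)
    (hident : ∀ i, IdentDistrib (X i) (X 0) μ μ)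
    (t₀ : ℝ) (ht₀ : 0 < t₀)
    (hmgf : ∀ t : ℝ, |t| < t₀ → Integrable (fun ω => exp (t * X 0 ω)) μ)
    (hint : Integrable (X 0) μ)
    (a : ℝ) (ha : ∫ ω, X 0 ω ∂μ < a) :
    ∃ I : ℝ, 0 < I ∧ ∀ n : ℕ,
      (μ {ω | (n : ℝ) * a ≤ ∑ i ∈ Finset.range n, X i ω}).toReal ≤
        exp (-(n : ℝ) * I) :=
  covering_stmt6_general μ X hmeas hindep hident t₀ ht₀ hmgf a ha
end

section
/- Union-bound lower bound for covering: Let (U₀, U_{k+1}) and independent codewords U_j(m_j), m_j ∈ [M_j], j ∈ [k], be random variables such that for each m = (m₁,…,m_k), the tuple (U₀, U₁(m₁),…,U_k(m_k), U_{k+1}) has law p(u₀)∏_{j=1}^{k+1} p(u_j|u₀). Let F be any event (subset of the product space), and for a nonempty S ⊆ [k] let F_S be its projection onto the (u₀, u_S, u_{k+1}) coordinates. If α_S is a constant with α_S ≤ log( p(u_S|u₀,u_{k+1}) / ∏_{j∈S} p(u_j|u₀) ) for all (u₀,u_S,u_{k+1}) ∈ F_S, then P(∃ m : (U₀, U₁(m₁),…,U_k(m_k),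 U_{k+1}) ∈ F) ≤ (∏_{j∈S} M_j) · e^{−α_S}. Consequently P(∀ m : tuple ∉ F) ≥ 1 − min_S (∏_{j∈S} M_j) e^{−α_S}. -/
open Finset Real

/-- Marginal of the joint pmf `p` on `U₀ × U_{[k]} × U_{k+1}` onto the
coordinates `(u₀, (u_j)_{j∈S}, u_{k+1})`, evaluated at a full tuple `z`
(only the `u₀`, `S`, and `u_{k+1}` coordinates of `z` matter). -/
def cvMargS {k : ℕ} {Ω₀ B : Type*} {A : Fin k → Type*}
    [Fintype Ω₀] [Fintype B] [∀ j, Fintype (A j)]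
    [DecidableEq Ω₀] [DecidableEq B] [∀ j, DecidableEq (A j)]
    (p : Ω₀ × (∀ j, A j) × B → ℝ) (S : Finset (Fin k))
    (z : Ω₀ × (∀ j, A j) × B) : ℝ :=
  ∑ w ∈ Finset.univ.filter (fun w : Ω₀ × (∀ j, A j) × B =>
    w.1 = z.1 ∧ (∀ j ∈ S, w.2.1 j = z.2.1 j) ∧ w.2.2 = z.2.2), p w

/-- Projection `F_S` of `F` onto the `(u₀, u_S, u_{k+1})` coordinates:
`z ∈ F_S` iff some tuple agreeing with `z` on `u₀`, the `S`-coordinates and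
`u_{k+1}` lies in `F`. -/
def cvProjS {k : ℕ} {Ω₀ B : Type*} {A : Fin k → Type*}
    (F : Set (Ω₀ × (∀ j, A j) × B)) (S : Finset (Fin k)) :
    Set (Ω₀ × (∀ j, A j) × B) :=
  {z | ∃ y : ∀ j, A j, (∀ j ∈ S, y j = z.2.1 j) ∧ (z.1, y, z.2.2) ∈ F}

/-! For a fixed index `m`, the tuple has density `p(u₀) ∏_j p(u_j|u₀) p(u_{k+1}|u₀)`. On `F_S` the
change of measure bounds this by `e^{-α_S}` times `p(u₀, u_S, u_{k+1}) ∏_{j ∉ S} p(u_j|u₀)`,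
which is again a pmf, so the tuple lands in `F_S` with probability at most `e^{-α_S}`.
If the tuple of some `m` lies in `F`, then the tuple of any `m'` agreeing with `m` on `S` lies in
`F_S`; hence a union bound over the `∏_{j ∈ S} M_j` indices whose coordinates outside `S`
are fixed gives the claim. -/

section FiniteSums

variable {Ω : Type*} [Fintype Ω]

theorem sum_filter_exists_le_sum_sum_filter {ι : Type*} (μ : Ω → ℝ) (hμ : ∀ ω, 0 ≤ μ ω)
    (R : Finset ι) (P : ι → Ω → Prop) [∀ i, DecidablePred (P i)]
    [DecidablePred fun ω => ∃ i ∈ R, P i ω] :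
    ∑ ω ∈ univ.filter (fun ω => ∃ i ∈ R, P i ω), μ ω ≤ ∑ i ∈ R, ∑ ω ∈ univ.filter (P i), μ ω := by
  simp only [sum_filter]
  rw [sum_comm]
  refine sum_le_sum fun ω _ => ?_
  have hterm : ∀ i ∈ R, 0 ≤ if P i ω then μ ω else 0 := fun i _ => by
    split_ifs <;> simp [hμ ω]
  split_ifs with h
  · obtain ⟨i, hi, hP⟩ := h
    simpa [hP] using single_le_sum hterm hi
  · exact sum_nonneg hterm

theorem sum_filter_comp_mem_eq_sum_fiber {Z : Type*} [Fintype Z] [DecidableEq Z] (μ : Ω → ℝ)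
    (f : Ω → Z) (E : Set Z) [DecidablePred (· ∈ E)] [DecidablePred fun ω => f ω ∈ E] :
    ∑ ω ∈ univ.filter (fun ω => f ω ∈ E), μ ω
      = ∑ z ∈ univ.filter (· ∈ E), ∑ ω ∈ univ.filter (fun ω => f ω = z), μ ω := by
  rw [← sum_fiberwise_of_maps_to (g := f) (t := univ.filter (· ∈ E)) (by simp)]
  refine sum_congr rfl fun z hz => sum_congr ?_ fun _ _ => rfl
  ext ω
  simp only [mem_filter, mem_univ, true_and] at hz ⊢
  exact ⟨And.right, fun h => ⟨h ▸ hz, h⟩⟩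

end FiniteSums

theorem sum_filter_forall_eq_prod_compl_sum {R ι : Type*} [CommSemiring R] [Fintype ι]
    [DecidableEq ι] {X : ι → Type*} [∀ i, Fintype (X i)]
    (S : Finset ι) (v : ∀ i, X i) [DecidablePred fun u : ∀ i, X i => ∀ i ∈ S, u i = v i]
    (g : ∀ i, X i → R) :
    ∑ u ∈ univ.filter (fun u : ∀ i, X i => ∀ i ∈ S, u i = v i), ∏ i ∈ Sᶜ, g i (u i)
      = ∏ i ∈ Sᶜ, ∑ a, g i a := by
  have hfilter : univ.filter (fun u : ∀ i, X i => ∀ i ∈ S, u i = v i)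
      = Fintype.piFinset fun i => if i ∈ S then {v i} else univ := by
    ext u
    simp only [mem_filter, mem_univ, true_and, Fintype.mem_piFinset]
    refine ⟨fun h i => ?_, fun h i hi => by simpa [hi] using h i⟩
    split_ifs with hi <;> simp [h i, hi]
  calc ∑ u ∈ univ.filter (fun u : ∀ i, X i => ∀ i ∈ S, u i = v i), ∏ i ∈ Sᶜ, g i (u i)
      = ∑ u ∈ Fintype.piFinset (fun i => if i ∈ S then {v i} else univ),
          ∏ i, if i ∈ Sᶜ then g i (u i) else 1 := by
        simp only [hfilter, Fintype.prod_ite_mem]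
    _ = ∏ i, ∑ a ∈ (if i ∈ S then {v i} else univ), if i ∈ Sᶜ then g i a else 1 :=
        (prod_univ_sum (fun i => if i ∈ S then {v i} else univ)
          fun i a => if i ∈ Sᶜ then g i a else 1).symm
    _ = ∏ i, if i ∈ Sᶜ then ∑ a, g i a else 1 :=
        prod_congr rfl fun i _ => by by_cases hi : i ∈ S <;> simp [hi]
    _ = ∏ i ∈ Sᶜ, ∑ a, g i a := Fintype.prod_ite_mem _ _

section Covering

variable {k : ℕ} {Ω₀ B : Type*} {A : Fin k → Type*}

/-- The tuple `(U₀, U₁(m₁), …, U_k(m_k), U_{k+1})` read off a realization `ω` of `U₀`, the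
codebooks `(U_j(·))_j` and `U_{k+1}`. -/
def codeTuple {M : Fin k → ℕ} (m : ∀ j, Fin (M j)) (ω : Ω₀ × (∀ j, Fin (M j) → A j) × B) :
    Ω₀ × (∀ j, A j) × B :=
  (ω.1, fun j => ω.2.1 j (m j), ω.2.2)

def productLaw (q0 : Ω₀ → ℝ) (qj : ∀ j, Ω₀ → A j → ℝ) (qB : Ω₀ → B → ℝ)
    (z : Ω₀ × (∀ j, A j) × B) : ℝ :=
  q0 z.1 * (∏ j, qj j z.1 (z.2.1 j)) * qB z.1 z.2.2

theorem codeTuple_mem_cvProjS {M : Fin k → ℕ} {F : Set (Ω₀ × (∀ j, A j) × B)}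
    {S : Finset (Fin k)} {m m' : ∀ j, Fin (M j)} (hm : ∀ j ∈ S, m' j = m j)
    {ω : Ω₀ × (∀ j, Fin (M j) → A j) × B} (hF : codeTuple m ω ∈ F) :
    codeTuple m' ω ∈ cvProjS F S :=
  ⟨fun j => ω.2.1 j (m j), fun j hj => by simp [codeTuple, hm j hj], hF⟩

theorem sum_exists_codeTuple_mem_le [Fintype Ω₀] [Fintype B] [∀ j, Fintype (A j)]
    {M : Fin k → ℕ} (μ : Ω₀ × (∀ j, Fin (M j) → A j) × B → ℝ) (hμ : ∀ ω, 0 ≤ μ ω)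
    (F : Set (Ω₀ × (∀ j, A j) × B)) (S : Finset (Fin k)) {c : ℝ} (hc : 0 ≤ c)
    [DecidablePred fun ω => ∃ m : ∀ j, Fin (M j), codeTuple m ω ∈ F]
    [∀ m : ∀ j, Fin (M j), DecidablePred fun ω => codeTuple m ω ∈ cvProjS F S]
    (hfix : ∀ m, ∑ ω ∈ univ.filter (fun ω => codeTuple m ω ∈ cvProjS F S), μ ω ≤ c) :
    ∑ ω ∈ univ.filter (fun ω => ∃ m : ∀ j, Fin (M j), codeTuple m ω ∈ F), μ ω
      ≤ (∏ j ∈ S, (M j : ℝ)) * c := by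
  classical
  rcases isEmpty_or_nonempty (∀ j, Fin (M j)) with _ | ⟨⟨d⟩⟩
  · simp only [IsEmpty.exists_iff, filter_false, sum_empty]
    positivity
  let R := Fintype.piFinset fun j => if j ∈ S then univ else {d j}
  have hcard : (#R : ℝ) = ∏ j ∈ S, (M j : ℝ) := by
    simp [R, apply_ite Finset.card]
  calc ∑ ω ∈ univ.filter (fun ω => ∃ m : ∀ j, Fin (M j), codeTuple m ω ∈ F), μ ω
      ≤ ∑ ω ∈ univ.filter (fun ω => ∃ m' ∈ R, codeTuple m' ω ∈ cvProjS F S), μ ω := by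
        refine sum_le_sum_of_subset_of_nonneg (fun ω => ?_) fun ω _ _ => hμ ω
        simp only [mem_filter, mem_univ, true_and]
        rintro ⟨m, hm⟩
        refine ⟨fun j => if j ∈ S then m j else d j, ?_, codeTuple_mem_cvProjS (by simp_all) hm⟩
        simp only [R, Fintype.mem_piFinset]
        intro j
        split_ifs <;> simp
    _ ≤ ∑ m' ∈ R, ∑ ω ∈ univ.filter (fun ω => codeTuple m' ω ∈ cvProjS F S), μ ω :=
        sum_filter_exists_le_sum_sum_filter μ hμ R _
    _ ≤ #R • c := sum_le_card_nsmul _ _ _ fun m' _ => hfix m'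
    _ = (∏ j ∈ S, (M j : ℝ)) * c := by rw [nsmul_eq_mul, hcard]

variable [Fintype Ω₀] [Fintype B] [∀ j, Fintype (A j)] [DecidableEq Ω₀] [∀ j, DecidableEq (A j)]
  {p : Ω₀ × (∀ j, A j) × B → ℝ} {q0 : Ω₀ → ℝ} {qj : ∀ j, Ω₀ → A j → ℝ} {qB : Ω₀ → B → ℝ}

theorem sum_cond_eq_one
    (hq0 : ∀ u₀, q0 u₀ = ∑ z ∈ univ.filter (fun z : Ω₀ × (∀ j, A j) × B => z.1 = u₀), p z)
    (hqj : ∀ j u₀ a, q0 u₀ * qj j u₀ a =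
      ∑ z ∈ univ.filter (fun z : Ω₀ × (∀ j, A j) × B => z.1 = u₀ ∧ z.2.1 j = a), p z)
    (j : Fin k) {u₀ : Ω₀} (h : q0 u₀ ≠ 0) : ∑ a, qj j u₀ a = 1 := by
  refine mul_left_cancel₀ h ?_
  rw [mul_one, mul_sum]
  simp only [hqj]
  rw [hq0, ← sum_fiberwise _ (fun z : Ω₀ × (∀ j, A j) × B => z.2.1 j) p]
  simp only [filter_filter]

variable [DecidableEq B]

theorem cvMargS_empty
    (hqB : ∀ u₀ b, q0 u₀ * qB u₀ b =
      ∑ z ∈ univ.filter (fun z : Ω₀ × (∀ j, A j) × B => z.1 = u₀ ∧ z.2.2 = b), p z)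
    (z : Ω₀ × (∀ j, A j) × B) : cvMargS p ∅ z = q0 z.1 * qB z.1 z.2.2 := by
  simp [cvMargS, hqB]

theorem sum_cvMargS_mul_prod_compl_eq_one (hp0 : ∀ z, 0 ≤ p z) (hp1 : ∑ z, p z = 1)
    (hq0 : ∀ u₀, q0 u₀ = ∑ z ∈ univ.filter (fun z : Ω₀ × (∀ j, A j) × B => z.1 = u₀), p z)
    (hqj : ∀ j u₀ a, q0 u₀ * qj j u₀ a =
      ∑ z ∈ univ.filter (fun z : Ω₀ × (∀ j, A j) × B => z.1 = u₀ ∧ z.2.1 j = a), p z)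
    (S : Finset (Fin k)) :
    ∑ z, cvMargS p S z * ∏ j ∈ Sᶜ, qj j z.1 (z.2.1 j) = 1 := by
  have hfiber : ∀ w : Ω₀ × (∀ j, A j) × B,
      univ.filter (fun z : Ω₀ × (∀ j, A j) × B =>
        w.1 = z.1 ∧ (∀ j ∈ S, w.2.1 j = z.2.1 j) ∧ w.2.2 = z.2.2)
      = {w.1} ×ˢ univ.filter (fun u : ∀ j, A j => ∀ j ∈ S, u j = w.2.1 j) ×ˢ {w.2.2} := by
    intro w
    ext z
    simp only [mem_filter, mem_univ, true_and, mem_product, mem_singleton]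
    constructor <;> rintro ⟨h1, h2, h3⟩ <;> exact ⟨h1.symm, fun j hj => (h2 j hj).symm, h3.symm⟩
  have hmass : ∀ w, p w * ∏ j ∈ Sᶜ, ∑ a, qj j w.1 a = p w := by
    intro w
    rcases (hp0 w).eq_or_lt with hw | hw
    · simp [← hw]
    have hq : q0 w.1 ≠ 0 := by
      refine (hw.trans_le ?_).ne'
      rw [hq0]
      exact single_le_sum (fun z _ => hp0 z) (by simp)
    simp [sum_cond_eq_one hq0 hqj _ hq]
  calc ∑ z, cvMargS p S z * ∏ j ∈ Sᶜ, qj j z.1 (z.2.1 j)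
      = ∑ w, ∑ z ∈ univ.filter (fun z : Ω₀ × (∀ j, A j) × B =>
          w.1 = z.1 ∧ (∀ j ∈ S, w.2.1 j = z.2.1 j) ∧ w.2.2 = z.2.2),
          p w * ∏ j ∈ Sᶜ, qj j z.1 (z.2.1 j) := by
        simp only [cvMargS, sum_mul]
        exact sum_comm' fun z w => by simp
    _ = ∑ w, p w * ∏ j ∈ Sᶜ, ∑ a, qj j w.1 a := by
        refine sum_congr rfl fun w _ => ?_
        simp only [hfiber, sum_product, sum_singleton]
        rw [← mul_sum, sum_filter_forall_eq_prod_compl_sum]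
    _ = 1 := by simp only [hmass, hp1]

theorem productLaw_le_of_exp_mul_le
    (hqj0 : ∀ j u₀ a, 0 ≤ qj j u₀ a)
    (hqB : ∀ u₀ b, q0 u₀ * qB u₀ b =
      ∑ z ∈ univ.filter (fun z : Ω₀ × (∀ j, A j) × B => z.1 = u₀ ∧ z.2.2 = b), p z)
    {S : Finset (Fin k)} {a : ℝ} {z : Ω₀ × (∀ j, A j) × B}
    (h : exp a * (cvMargS p ∅ z * ∏ j ∈ S, qj j z.1 (z.2.1 j)) ≤ cvMargS p S z) :
    productLaw q0 qj qB z ≤ exp (-a) * (cvMargS p S z * ∏ j ∈ Sᶜ, qj j z.1 (z.2.1 j)) := by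
  have hsplit : productLaw q0 qj qB z
      = (cvMargS p ∅ z * ∏ j ∈ S, qj j z.1 (z.2.1 j)) * ∏ j ∈ Sᶜ, qj j z.1 (z.2.1 j) := by
    rw [productLaw, cvMargS_empty hqB, ← prod_mul_prod_compl S]
    ring
  have hchange : cvMargS p ∅ z * ∏ j ∈ S, qj j z.1 (z.2.1 j) ≤ exp (-a) * cvMargS p S z := by
    rw [exp_neg, ← div_eq_inv_mul, le_div_iff₀' (exp_pos a)]
    exact h
  rw [hsplit, ← mul_assoc]
  exact mul_le_mul_of_nonneg_right hchange (prod_nonneg fun j _ => hqj0 j _ _)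

theorem sum_productLaw_cvProjS_le (hp0 : ∀ z, 0 ≤ p z) (hp1 : ∑ z, p z = 1)
    (hq0 : ∀ u₀, q0 u₀ = ∑ z ∈ univ.filter (fun z : Ω₀ × (∀ j, A j) × B => z.1 = u₀), p z)
    (hqj0 : ∀ j u₀ a, 0 ≤ qj j u₀ a)
    (hqj : ∀ j u₀ a, q0 u₀ * qj j u₀ a =
      ∑ z ∈ univ.filter (fun z : Ω₀ × (∀ j, A j) × B => z.1 = u₀ ∧ z.2.1 j = a), p z)
    (hqB : ∀ u₀ b, q0 u₀ * qB u₀ b =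
      ∑ z ∈ univ.filter (fun z : Ω₀ × (∀ j, A j) × B => z.1 = u₀ ∧ z.2.2 = b), p z)
    {F : Set (Ω₀ × (∀ j, A j) × B)} {S : Finset (Fin k)} {a : ℝ}
    [DecidablePred (· ∈ cvProjS F S)]
    (hα : ∀ z ∈ cvProjS F S,
      exp a * (cvMargS p ∅ z * ∏ j ∈ S, qj j z.1 (z.2.1 j)) ≤ cvMargS p S z) :
    ∑ z ∈ univ.filter (· ∈ cvProjS F S), productLaw q0 qj qB z ≤ exp (-a) := by
  have hnonneg : ∀ z, 0 ≤ exp (-a) * (cvMargS p S z * ∏ j ∈ Sᶜ, qj j z.1 (z.2.1 j)) := fun z =>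
    mul_nonneg (exp_pos _).le <|
      mul_nonneg (sum_nonneg fun w _ => hp0 w) (prod_nonneg fun j _ => hqj0 j _ _)
  calc ∑ z ∈ univ.filter (· ∈ cvProjS F S), productLaw q0 qj qB z
      ≤ ∑ z ∈ univ.filter (· ∈ cvProjS F S),
          exp (-a) * (cvMargS p S z * ∏ j ∈ Sᶜ, qj j z.1 (z.2.1 j)) :=
        sum_le_sum fun z hz => productLaw_le_of_exp_mul_le hqj0 hqB (hα z (mem_filter.mp hz).2)
    _ ≤ ∑ z, exp (-a) * (cvMargS p S z * ∏ j ∈ Sᶜ, qj j z.1 (z.2.1 j)) :=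
        sum_le_sum_of_subset_of_nonneg (filter_subset _ _) fun z _ _ => hnonneg z
    _ = exp (-a) := by
        rw [← mul_sum, sum_cvMargS_mul_prod_compl_eq_one hp0 hp1 hq0 hqj, mul_one]

end Covering

open scoped Classical in
/-- **Union-bound lower bound for covering (converse/packing bound).**
If each tuple `(U₀, U₁(m₁), …, U_k(m_k), U_{k+1})` has law
`p(u₀)·∏_j p(u_j|u₀)·p(u_{k+1}|u₀)` (the `q`'s being conditional marginals of
the joint pmf `p`), and `α S` satisfies the change-of-measure bound
`α S ≤ log(p(u_S|u₀,u_{k+1})/∏_{j∈S} p(u_j|u₀))` on the projection `F_S`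
(stated multiplicatively), then for every nonempty `S ⊆ [k]`,
`P(∃ m : tuple ∈ F) ≤ (∏_{j∈S} M_j)·e^{−α_S}` and consequently
`P(∀ m : tuple ∉ F) ≥ 1 − (∏_{j∈S} M_j)·e^{−α_S}`. -/
theorem covering_stmt9
    {k : ℕ} {Ω₀ B : Type*} {A : Fin k → Type*}
    [Fintype Ω₀] [Fintype B] [∀ j, Fintype (A j)]
    [DecidableEq Ω₀] [DecidableEq B] [∀ j, DecidableEq (A j)]
    (p : Ω₀ × (∀ j, A j) × B → ℝ)
    (hp0 : ∀ z, 0 ≤ p z) (hp1 : ∑ z, p z = 1)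
    (q0 : Ω₀ → ℝ) (qj : ∀ j : Fin k, Ω₀ → A j → ℝ) (qB : Ω₀ → B → ℝ)
    (hq0 : ∀ u₀, q0 u₀ =
      ∑ z ∈ Finset.univ.filter (fun z : Ω₀ × (∀ j, A j) × B => z.1 = u₀), p z)
    (hqj : ∀ (j : Fin k) u₀ a, 0 ≤ qj j u₀ a ∧ q0 u₀ * qj j u₀ a =
      ∑ z ∈ Finset.univ.filter
        (fun z : Ω₀ × (∀ j, A j) × B => z.1 = u₀ ∧ z.2.1 j = a), p z)
    (hqB : ∀ u₀ b, 0 ≤ qB u₀ b ∧ q0 u₀ * qB u₀ b =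
      ∑ z ∈ Finset.univ.filter
        (fun z : Ω₀ × (∀ j, A j) × B => z.1 = u₀ ∧ z.2.2 = b), p z)
    (M : Fin k → ℕ)
    (μ : Ω₀ × (∀ j, Fin (M j) → A j) × B → ℝ)
    (hμ0 : ∀ ω, 0 ≤ μ ω) (hμ1 : ∑ ω, μ ω = 1)
    (hlaw : ∀ (m : ∀ j, Fin (M j)) (z : Ω₀ × (∀ j, A j) × B),
      ∑ ω ∈ Finset.univ.filter (fun ω : Ω₀ × (∀ j, Fin (M j) → A j) × B =>
          ω.1 = z.1 ∧ (∀ j, ω.2.1 j (m j) = z.2.1 j) ∧ ω.2.2 = z.2.2), μ ω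
        = q0 z.1 * (∏ j, qj j z.1 (z.2.1 j)) * qB z.1 z.2.2)
    (F : Set (Ω₀ × (∀ j, A j) × B))
    (α : Finset (Fin k) → ℝ)
    (hα : ∀ S : Finset (Fin k), S.Nonempty → ∀ z ∈ cvProjS F S,
      Real.exp (α S) * (cvMargS p ∅ z * ∏ j ∈ S, qj j z.1 (z.2.1 j))
        ≤ cvMargS p S z) :
    (∀ S : Finset (Fin k), S.Nonempty →
      ∑ ω ∈ Finset.univ.filter (fun ω : Ω₀ × (∀ j, Fin (M j) → A j) × B =>
          ∃ m : ∀ j, Fin (M j), (ω.1, fun j => ω.2.1 j (m j), ω.2.2) ∈ F), μ ω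
        ≤ (∏ j ∈ S, (M j : ℝ)) * Real.exp (-α S)) ∧
    (∀ S : Finset (Fin k), S.Nonempty →
      1 - (∏ j ∈ S, (M j : ℝ)) * Real.exp (-α S) ≤
        ∑ ω ∈ Finset.univ.filter (fun ω : Ω₀ × (∀ j, Fin (M j) → A j) × B =>
          ∀ m : ∀ j, Fin (M j), (ω.1, fun j => ω.2.1 j (m j), ω.2.2) ∉ F), μ ω) := by
  classical
  have hlaw_codeTuple : ∀ m z, ∑ ω ∈ univ.filter (fun ω => codeTuple m ω = z), μ ω
      = productLaw q0 qj qB z := fun m z => by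
    refine (sum_congr (filter_congr fun ω _ => ?_) fun _ _ => rfl).trans (hlaw m z)
    simp only [codeTuple, Prod.ext_iff, funext_iff]
  have hexists : ∀ S : Finset (Fin k), S.Nonempty →
      ∑ ω ∈ univ.filter (fun ω => ∃ m : ∀ j, Fin (M j), codeTuple m ω ∈ F), μ ω
        ≤ (∏ j ∈ S, (M j : ℝ)) * exp (-α S) := fun S hS =>
    sum_exists_codeTuple_mem_le μ hμ0 F S (exp_pos _).le fun m => by
      rw [sum_filter_comp_mem_eq_sum_fiber, sum_congr rfl fun z _ => hlaw_codeTuple m z]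
      exact sum_productLaw_cvProjS_le hp0 hp1 hq0 (fun j u₀ a => (hqj j u₀ a).1)
        (fun j u₀ a => (hqj j u₀ a).2) (fun u₀ b => (hqB u₀ b).2) (hα S hS)
  refine ⟨hexists, fun S hS => ?_⟩
  have hsplit := sum_filter_add_sum_filter_not univ
    (fun ω => ∃ m : ∀ j, Fin (M j), codeTuple m ω ∈ F) μ
  rw [hμ1, filter_congr fun ω _ => not_exists] at hsplit
  have hbound := hexists S hS
  unfold codeTuple at hsplit hbound
  linarith
end

section
/- Pairwise second-moment bound: In the covering setup, fix (u₀,u_{k+1}) and let m ≠ m' ∈ M with nonempty agreement set S = {j : m_j = m'_j}. Assume the pairwise independence condition: given (U₀,U_{k+1})=(u₀,u_{k+1}), the joint law of (U_j(m_j))_j and (U_j(m'_j))_j is ∏_{j=1}^k p(u_j|u₀) · ∏_{j∈S^c} p(u'_j|u₀) with u_j = u'_j forced for j ∈ S. Let α_S and β_{S^c} be constants with α_S ≤ log(p(u_S|u₀,u_{k+1})/∏_{j∈S}p(u_j|u₀)) on F_S and β_{S^c} ≤ log(p(u_{S^c}|u₀,u_S,u_{k+1})/∏_{j∈S^c}p(u_j|u₀))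 on F. Then E[Z_m Z_{m'} | u₀, u_{k+1}] ≤ e^{−α_S − 2β_{S^c}}. -/
/-!
Group the codebooks `c` by the pair `(x, x') = (c(m), c(m'))`. By Assumption I a pair that
agrees on `S` carries mass `∏ⱼ q(xⱼ) · ∏_{j ∈ Sᶜ} q(x'ⱼ)`, and on `F × F` the two change-of-measure
bounds dominate it by `e^{-α-2β} · p(x) p(x') / (p(x_S) · P₀)`, where `p(x) = p(u₀, x, u_{k+1})`,
`p(x_S)` is the marginal of the `S`-coordinates and `P₀ = p(u₀, u_{k+1})`. Summing `x'` over the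
pairs agreeing with `x` on `S` cancels `p(x_S)`, and summing over `x` then cancels `P₀`.
-/

open Finset Real

theorem sum_mul_comp_eq_sum_fiber_mul {ι κ R : Type*} [Fintype ι] [Fintype κ] [DecidableEq κ]
    [NonUnitalNonAssocSemiring R] (ν : ι → R) (g : ι → κ) (f : κ → R) :
    ∑ i, ν i * f (g i) = ∑ y, (∑ i with g i = y, ν i) * f y := by
  rw [← Finset.sum_fiberwise univ g]
  refine sum_congr rfl fun y _ => ?_
  rw [sum_mul]
  exact sum_congr rfl fun i hi => by rw [(mem_filter.1 hi).2]

theorem sum_sum_ite_mul_div_sum_filter {X 𝕜 : Type*} [Fintype X] [Semifield 𝕜] [PartialOrder 𝕜]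
    [IsOrderedRing 𝕜] (w : X → 𝕜) (hw : ∀ x, 0 ≤ w x) (r : X → X → Prop) [DecidableRel r]
    (hr : ∀ x, r x x) :
    ∑ x, ∑ y, (if r x y then w x * w y / ∑ z with r x z, w z else 0) = ∑ x, w x := by
  refine sum_congr rfl fun x _ => ?_
  have hle : w x ≤ ∑ z with r x z, w z :=
    single_le_sum (fun z _ => hw z) (mem_filter.2 ⟨mem_univ x, hr x⟩)
  simp_rw [mul_div_right_comm (w x), ← sum_filter, ← mul_sum]
  exact div_mul_cancel_of_imp fun h => le_antisymm (h ▸ hle) (hw x)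

theorem mul_mul_le_exp_div_mul_div {a s e₁ e₂ e₃ t t' α β : ℝ} (ha : 0 < a) (he₁ : 0 ≤ e₁)
    (he₂ : 0 ≤ e₂) (he₃ : 0 ≤ e₃) (h₁ : exp α * (a * e₁) ≤ s) (h₂ : exp β * (s * e₂) ≤ t)
    (h₃ : exp β * (s * e₃) ≤ t') :
    e₁ * e₂ * e₃ ≤ exp (-α - 2 * β) / a * (t * t' / s) := by
  rcases (mul_nonneg (exp_pos α).le (mul_nonneg ha.le he₁)).trans h₁ |>.eq_or_lt with hs | hs
  · -- `s = 0` forces `e₁ = 0`, and the right side is `0` because `t * t' / 0 = 0`.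
    have : e₁ = 0 := by nlinarith [mul_pos (exp_pos α) ha]
    simp [this, ← hs]
  have ht : 0 ≤ t := (by positivity : 0 ≤ exp β * (s * e₂)).trans h₂
  have key : (exp α * (a * e₁)) * (exp β * (s * e₂)) * (exp β * (s * e₃)) ≤ s * t * t' :=
    mul_le_mul (mul_le_mul h₁ h₂ (by positivity) hs.le) h₃ (by positivity)
      (mul_nonneg hs.le ht)
  have hexp : exp (-α - 2 * β) = (exp α * exp β * exp β)⁻¹ := by
    rw [← exp_add, ← exp_add, ← exp_neg]; ring_nf
  calc e₁ * e₂ * e₃ ≤ s * t * t' / (exp α * exp β * exp β * a * s * s) := by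
        rw [le_div_iff₀ (by positivity)]; linarith
    _ = exp (-α - 2 * β) / a * (t * t' / s) := by rw [hexp]; field_simp

theorem sum_filter_fst_eq_and_snd_snd_eq {α β γ R : Type*} [Fintype α] [Fintype β] [Fintype γ]
    [DecidableEq α] [DecidableEq γ] [AddCommMonoid R] (f : α × β × γ → R) (a : α) (c : γ)
    (P : β → Prop) [DecidablePred P] :
    ∑ w with w.1 = a ∧ P w.2.1 ∧ w.2.2 = c, f w = ∑ x with P x, f (a, x, c) := by
  simp [sum_filter, Fintype.sum_prod_type, ite_and]

theorem sum_codeword_pair_fiber_eq_ite {k : ℕ} {Ω₀ : Type*} {A : Fin k → Type*}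
    [∀ j, Fintype (A j)] [∀ j, DecidableEq (A j)] {M : Fin k → ℕ} (S : Finset (Fin k))
    (ν : (∀ j, Fin (M j) → A j) → ℝ)
    (m m' : ∀ j, Fin (M j)) (hS : S = univ.filter (fun j => m j = m' j))
    (qj : ∀ j : Fin k, Ω₀ → A j → ℝ) (u₀ : Ω₀)
    (hνpair : ∀ (x x' : ∀ j, A j), (∀ j, m j = m' j → x j = x' j) →
      ∑ c ∈ Finset.univ.filter (fun c : ∀ j, Fin (M j) → A j =>
          (∀ j, c j (m j) = x j) ∧ ∀ j, c j (m' j) = x' j), ν c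
        = (∏ j, qj j u₀ (x j)) * ∏ j ∈ Sᶜ, qj j u₀ (x' j))
    (x x' : ∀ j, A j) :
    ∑ c with ((fun j => c j (m j)), (fun j => c j (m' j))) = (x, x'), ν c
      = if ∀ j ∈ S, x j = x' j then (∏ j, qj j u₀ (x j)) * ∏ j ∈ Sᶜ, qj j u₀ (x' j) else 0 := by
  subst hS
  simp only [Prod.ext_iff, funext_iff]
  split_ifs with hxx'
  · exact hνpair x x' fun j hj => hxx' j (by simp [hj])
  · refine sum_eq_zero fun c hc => absurd (fun j hj => ?_) hxx'
    obtain ⟨hcx, hcx'⟩ := (mem_filter.1 hc).2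
    rw [← hcx, ← hcx', (mem_filter.1 hj).2]

section Covering

variable {k : ℕ} {Ω₀ B : Type*} {A : Fin k → Type*} [Fintype Ω₀] [Fintype B]
  [∀ j, Fintype (A j)] [DecidableEq Ω₀] [DecidableEq B] [∀ j, DecidableEq (A j)]
  (p : Ω₀ × (∀ j, A j) × B → ℝ) (S : Finset (Fin k))

theorem cvMargS_eq_sum_filter (a : Ω₀) (x : ∀ j, A j) (c : B) :
    cvMargS p S (a, x, c) = ∑ y with ∀ j ∈ S, x j = y j, p (a, y, c) := by
  rw [cvMargS]
  dsimp only
  rw [sum_filter_fst_eq_and_snd_snd_eq p a c (fun y => ∀ j ∈ S, y j = x j)]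
  simp only [eq_comm]

theorem cvMargS_empty_s12 (a : Ω₀) (x : ∀ j, A j) (c : B) :
    cvMargS p ∅ (a, x, c) = ∑ y, p (a, y, c) := by
  simp [cvMargS_eq_sum_filter]

theorem cvMargS_congr {a : Ω₀} {x x' : ∀ j, A j} {c : B} (h : ∀ j ∈ S, x j = x' j) :
    cvMargS p S (a, x, c) = cvMargS p S (a, x', c) := by
  simp only [cvMargS_eq_sum_filter]
  exact sum_congr (filter_congr fun y _ => forall₂_congr fun j hj => by rw [h j hj])
    fun _ _ => rfl

theorem cvMargS_nonneg (hp : ∀ z, 0 ≤ p z) (z : Ω₀ × (∀ j, A j) × B) : 0 ≤ cvMargS p S z :=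
  sum_nonneg fun w _ => hp w

theorem prod_mul_prod_compl_le_of_change_of_measure
    (qj : ∀ j : Fin k, Ω₀ → A j → ℝ) (hqj : ∀ j u₀ a, 0 ≤ qj j u₀ a)
    (F : Set (Ω₀ × (∀ j, A j) × B)) {α β : ℝ}
    (hα : ∀ z ∈ cvProjS F S,
      exp α * (cvMargS p ∅ z * ∏ j ∈ S, qj j z.1 (z.2.1 j)) ≤ cvMargS p S z)
    (hβ : ∀ z ∈ F, exp β * (cvMargS p S z * ∏ j ∈ Sᶜ, qj j z.1 (z.2.1 j)) ≤ p z)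
    {a : Ω₀} {c : B} (hpos : 0 < ∑ y, p (a, y, c)) {x x' : ∀ j, A j}
    (hx : (a, x, c) ∈ F) (hx' : (a, x', c) ∈ F) (hxx' : ∀ j ∈ S, x j = x' j) :
    (∏ j, qj j a (x j)) * ∏ j ∈ Sᶜ, qj j a (x' j)
      ≤ exp (-α - 2 * β) / (∑ y, p (a, y, c)) *
          (p (a, x, c) * p (a, x', c) / cvMargS p S (a, x, c)) := by
  rw [← prod_mul_prod_compl S]
  refine mul_mul_le_exp_div_mul_div hpos (prod_nonneg fun j _ => hqj _ _ _)
    (prod_nonneg fun j _ => hqj _ _ _) (prod_nonneg fun j _ => hqj _ _ _) ?_ (hβ _ hx) ?_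
  · simpa only [cvMargS_empty_s12] using hα (a, x, c) ⟨x, fun _ _ => rfl, hx⟩
  · simpa only [cvMargS_congr p S hxx'] using hβ _ hx'

open scoped Classical in
theorem sum_codeword_pair_fiber_mul_indicator_le (hp : ∀ z, 0 ≤ p z) {M : Fin k → ℕ}
    (ν : (∀ j, Fin (M j) → A j) → ℝ) (m m' : ∀ j, Fin (M j))
    (hS : S = univ.filter (fun j => m j = m' j))
    (qj : ∀ j : Fin k, Ω₀ → A j → ℝ) (hqj : ∀ j u₀ a, 0 ≤ qj j u₀ a) {u₀ : Ω₀} {b : B}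
    (hνpair : ∀ (x x' : ∀ j, A j), (∀ j, m j = m' j → x j = x' j) →
      ∑ c ∈ Finset.univ.filter (fun c : ∀ j, Fin (M j) → A j =>
          (∀ j, c j (m j) = x j) ∧ ∀ j, c j (m' j) = x' j), ν c
        = (∏ j, qj j u₀ (x j)) * ∏ j ∈ Sᶜ, qj j u₀ (x' j))
    (F : Set (Ω₀ × (∀ j, A j) × B)) {α β : ℝ}
    (hα : ∀ z ∈ cvProjS F S,
      exp α * (cvMargS p ∅ z * ∏ j ∈ S, qj j z.1 (z.2.1 j)) ≤ cvMargS p S z)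
    (hβ : ∀ z ∈ F, exp β * (cvMargS p S z * ∏ j ∈ Sᶜ, qj j z.1 (z.2.1 j)) ≤ p z)
    (hpos : 0 < ∑ y, p (u₀, y, b)) (x x' : ∀ j, A j) :
    (∑ c with ((fun j => c j (m j)), (fun j => c j (m' j))) = (x, x'), ν c) *
        ((if (u₀, x, b) ∈ F then (1:ℝ) else 0) * (if (u₀, x', b) ∈ F then (1:ℝ) else 0))
      ≤ if ∀ j ∈ S, x j = x' j then
          exp (-α - 2 * β) / (∑ y, p (u₀, y, b)) *
            (p (u₀, x, b) * p (u₀, x', b) / cvMargS p S (u₀, x, b)) else 0 := by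
  rw [sum_codeword_pair_fiber_eq_ite S ν m m' hS qj u₀ hνpair]
  have hbound_nonneg : 0 ≤ exp (-α - 2 * β) / (∑ y, p (u₀, y, b)) *
      (p (u₀, x, b) * p (u₀, x', b) / cvMargS p S (u₀, x, b)) := by
    have := cvMargS_nonneg p S hp (u₀, x, b)
    have := hp (u₀, x, b); have := hp (u₀, x', b)
    positivity
  split_ifs with hxx' hx hx' <;> simp only [mul_one, mul_zero, le_refl, hbound_nonneg]
  exact prod_mul_prod_compl_le_of_change_of_measure p S qj hqj F hα hβ hpos hx hx' hxx'

end Covering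

open scoped Classical in
theorem covering_stmt12_general
    {k : ℕ} {Ω₀ B : Type*} {A : Fin k → Type*}
    [Fintype Ω₀] [Fintype B] [∀ j, Fintype (A j)]
    [DecidableEq Ω₀] [DecidableEq B] [∀ j, DecidableEq (A j)]
    (p : Ω₀ × (∀ j, A j) × B → ℝ)
    (hp0 : ∀ z, 0 ≤ p z)
    (qj : ∀ j : Fin k, Ω₀ → A j → ℝ) (hqj : ∀ j u₀ a, 0 ≤ qj j u₀ a)
    (M : Fin k → ℕ)
    (u₀ : Ω₀) (b : B)
    -- the pair (u₀,u_{k+1}) has positive probability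
    (hpos : 0 < ∑ z ∈ Finset.univ.filter (fun z : Ω₀ × (∀ j, A j) × B =>
        z.1 = u₀ ∧ z.2.2 = b), p z)
    (ν : (∀ j, Fin (M j) → A j) → ℝ)
    (m m' : ∀ j, Fin (M j))
    (S : Finset (Fin k)) (hS : S = Finset.univ.filter (fun j => m j = m' j))
    -- Assumption I: conditional pairwise joint law of the two codeword tuples
    (hνpair : ∀ (x x' : ∀ j, A j), (∀ j, m j = m' j → x j = x' j) →
      ∑ c ∈ Finset.univ.filter (fun c : ∀ j, Fin (M j) → A j =>
          (∀ j, c j (m j) = x j) ∧ ∀ j, c j (m' j) = x' j), ν c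
        = (∏ j, qj j u₀ (x j)) * ∏ j ∈ Sᶜ, qj j u₀ (x' j))
    (F : Set (Ω₀ × (∀ j, A j) × B))
    (αS βSc : ℝ)
    (hα : ∀ z ∈ cvProjS F S,
      Real.exp αS * (cvMargS p ∅ z * ∏ j ∈ S, qj j z.1 (z.2.1 j))
        ≤ cvMargS p S z)
    (hβ : ∀ z ∈ F,
      Real.exp βSc * (cvMargS p S z * ∏ j ∈ Sᶜ, qj j z.1 (z.2.1 j))
        ≤ p z) :
    ∑ c : ∀ j, Fin (M j) → A j, ν c *
        ((if (u₀, fun j => c j (m j), b) ∈ F then (1:ℝ) else 0) *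
         (if (u₀, fun j => c j (m' j), b) ∈ F then (1:ℝ) else 0))
      ≤ Real.exp (-αS - 2 * βSc) := by
  set P₀ := ∑ y, p (u₀, y, b)
  have hP₀ : ∑ z with z.1 = u₀ ∧ z.2.2 = b, p z = P₀ := by
    simpa using sum_filter_fst_eq_and_snd_snd_eq p u₀ b (fun _ => True)
  rw [hP₀] at hpos
  calc _ = ∑ pr : (∀ j, A j) × (∀ j, A j),
          (∑ c with ((fun j => c j (m j)), (fun j => c j (m' j))) = pr, ν c) *
          ((if (u₀, pr.1, b) ∈ F then (1:ℝ) else 0) *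
            (if (u₀, pr.2, b) ∈ F then (1:ℝ) else 0)) :=
        sum_mul_comp_eq_sum_fiber_mul ν (fun c => ((fun j => c j (m j)), (fun j => c j (m' j))))
          fun pr => (if (u₀, pr.1, b) ∈ F then 1 else 0) * (if (u₀, pr.2, b) ∈ F then 1 else 0)
    _ ≤ ∑ x, ∑ x', if ∀ j ∈ S, x j = x' j then
          exp (-αS - 2 * βSc) / P₀ *
            (p (u₀, x, b) * p (u₀, x', b) / cvMargS p S (u₀, x, b)) else 0 := by
        rw [Fintype.sum_prod_type]
        gcongr with x _ x' _
        exact sum_codeword_pair_fiber_mul_indicator_le p S hp0 ν m m' hS qj hqj hνpair F hα hβ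
          hpos x x'
    _ = exp (-αS - 2 * βSc) / P₀ * ∑ x, ∑ x', if ∀ j ∈ S, x j = x' j then
          p (u₀, x, b) * p (u₀, x', b) / ∑ y with ∀ j ∈ S, x j = y j, p (u₀, y, b) else 0 := by
        simp only [mul_sum, mul_ite, mul_zero, cvMargS_eq_sum_filter]
    _ = exp (-αS - 2 * βSc) := by
        rw [sum_sum_ite_mul_div_sum_filter _ (fun y => hp0 _) _ fun x j _ => rfl,
          div_mul_cancel₀ _ hpos.ne']

open scoped Classical in
/-- **Pairwise second-moment bound.**  Fix `(u₀,u_{k+1})` of positive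
probability and distinct indices `m ≠ m'` with nonempty agreement set
`S = {j : m_j = m'_j}`.  Under the pairwise independence condition of
Assumption I (the conditional joint law of the two codeword tuples is
`∏_j p(u_j|u₀) · ∏_{j∈Sᶜ} p(u'_j|u₀)`), and with change-of-measure constants
`α_S ≤ log(p(u_S|u₀,u_{k+1})/∏_{j∈S}p(u_j|u₀))` on `F_S` and
`β_{Sᶜ} ≤ log(p(u_{Sᶜ}|u₀,u_S,u_{k+1})/∏_{j∈Sᶜ}p(u_j|u₀))` on `F`
(both stated multiplicatively), one has
`E[Z_m Z_{m'} | u₀, u_{k+1}] ≤ e^{−α_S − 2β_{Sᶜ}}`. -/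
theorem covering_stmt12
    {k : ℕ} {Ω₀ B : Type*} {A : Fin k → Type*}
    [Fintype Ω₀] [Fintype B] [∀ j, Fintype (A j)]
    [DecidableEq Ω₀] [DecidableEq B] [∀ j, DecidableEq (A j)]
    (p : Ω₀ × (∀ j, A j) × B → ℝ)
    (hp0 : ∀ z, 0 ≤ p z) (hp1 : ∑ z, p z = 1)
    (qj : ∀ j : Fin k, Ω₀ → A j → ℝ) (hqj : ∀ j u₀ a, 0 ≤ qj j u₀ a)
    (M : Fin k → ℕ)
    (u₀ : Ω₀) (b : B)
    -- the pair (u₀,u_{k+1}) has positive probability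
    (hpos : 0 < ∑ z ∈ Finset.univ.filter (fun z : Ω₀ × (∀ j, A j) × B =>
        z.1 = u₀ ∧ z.2.2 = b), p z)
    (ν : (∀ j, Fin (M j) → A j) → ℝ)
    (hν0 : ∀ c, 0 ≤ ν c) (hν1 : ∑ c, ν c = 1)
    (m m' : ∀ j, Fin (M j)) (hmm' : m ≠ m')
    (S : Finset (Fin k)) (hS : S = Finset.univ.filter (fun j => m j = m' j))
    (hSne : S.Nonempty)
    -- Assumption I: conditional pairwise joint law of the two codeword tuples
    (hνpair : ∀ (x x' : ∀ j, A j), (∀ j, m j = m' j → x j = x' j) →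
      ∑ c ∈ Finset.univ.filter (fun c : ∀ j, Fin (M j) → A j =>
          (∀ j, c j (m j) = x j) ∧ ∀ j, c j (m' j) = x' j), ν c
        = (∏ j, qj j u₀ (x j)) * ∏ j ∈ Sᶜ, qj j u₀ (x' j))
    (F : Set (Ω₀ × (∀ j, A j) × B))
    (αS βSc : ℝ)
    (hα : ∀ z ∈ cvProjS F S,
      Real.exp αS * (cvMargS p ∅ z * ∏ j ∈ S, qj j z.1 (z.2.1 j))
        ≤ cvMargS p S z)
    (hβ : ∀ z ∈ F,
      Real.exp βSc * (cvMargS p S z * ∏ j ∈ Sᶜ, qj j z.1 (z.2.1 j))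
        ≤ p z) :
    ∑ c : ∀ j, Fin (M j) → A j, ν c *
        ((if (u₀, fun j => c j (m j), b) ∈ F then (1:ℝ) else 0) *
         (if (u₀, fun j => c j (m' j), b) ∈ F then (1:ℝ) else 0))
      ≤ Real.exp (-αS - 2 * βSc) :=
  covering_stmt12_general p hp0 qj hqj M u₀ b hpos ν m m' S hS hνpair F αS βSc hα hβ
end

section
/- Multivariate covering lemma (converse/packing part, weak typicality): With the same setup, suppose M_j ≤ e^{nR_j} for all j ∈ [k] and P(∃ m : (U₀ⁿ, U₁ⁿ(m₁),…,U_kⁿ(m_k), U_{k+1}ⁿ) ∈ A_δ^{(n)}) → 1 as n → ∞. Then for every nonempty S ⊆ [k], ∑_{j∈S} R_j ≥ ∑_{j∈S} H(U_j|U₀) − H(U_S|U₀,U_{k+1}) − 2(|S|+1)δ. -/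
open Finset Real

/-- Marginal of the joint pmf `p` on `U₀ × U_{[k]} × U_{k+1}` onto the subset
of coordinates consisting of: `u₀` (if `b0`), the `u_j` for `j ∈ S`, and
`u_{k+1}` (if `bB`); evaluated at a full tuple `z`. -/
def wMarg {k : ℕ} {Ω₀ B : Type*} {A : Fin k → Type*}
    [Fintype Ω₀] [Fintype B] [∀ j, Fintype (A j)]
    [DecidableEq Ω₀] [DecidableEq B] [∀ j, DecidableEq (A j)]
    (p : Ω₀ × (∀ j, A j) × B → ℝ) (b0 : Bool) (S : Finset (Fin k)) (bB : Bool)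
    (z : Ω₀ × (∀ j, A j) × B) : ℝ :=
  ∑ w ∈ Finset.univ.filter (fun w : Ω₀ × (∀ j, A j) × B =>
    (b0 = true → w.1 = z.1) ∧ (∀ j ∈ S, w.2.1 j = z.2.1 j) ∧
      (bB = true → w.2.2 = z.2.2)), p w

/-- Joint Shannon entropy (in nats) of the selected subset of coordinates. -/
noncomputable def wEnt {k : ℕ} {Ω₀ B : Type*} {A : Fin k → Type*}
    [Fintype Ω₀] [Fintype B] [∀ j, Fintype (A j)]
    [DecidableEq Ω₀] [DecidableEq B] [∀ j, DecidableEq (A j)]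
    (p : Ω₀ × (∀ j, A j) × B → ℝ) (b0 : Bool) (S : Finset (Fin k)) (bB : Bool) : ℝ :=
  -∑ z : Ω₀ × (∀ j, A j) × B, p z * Real.log (wMarg p b0 S bB z)

/-- The weakly `δ`-typical set `A_δ^{(n)}`. -/
noncomputable def wTypical {k : ℕ} {Ω₀ B : Type*} {A : Fin k → Type*}
    [Fintype Ω₀] [Fintype B] [∀ j, Fintype (A j)]
    [DecidableEq Ω₀] [DecidableEq B] [∀ j, DecidableEq (A j)]
    (p : Ω₀ × (∀ j, A j) × B → ℝ) (n : ℕ) (δ : ℝ) :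
    Set (Fin n → Ω₀ × (∀ j, A j) × B) :=
  {u | ∀ (b0 : Bool) (S : Finset (Fin k)) (bB : Bool),
    (b0 = true ∨ S.Nonempty ∨ bB = true) →
    |(-(1 / (n : ℝ)) * ∑ i, Real.log (wMarg p b0 S bB (u i))) -
      wEnt p b0 S bB| ≤ δ}

/-- Marginal pmf of `U₀`. -/
def pr0 {k : ℕ} {Ω₀ B : Type*} {A : Fin k → Type*}
    [Fintype Ω₀] [Fintype B] [∀ j, Fintype (A j)] [DecidableEq Ω₀]
    (p : Ω₀ × (∀ j, A j) × B → ℝ) (u₀ : Ω₀) : ℝ :=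
  ∑ z ∈ Finset.univ.filter (fun z : Ω₀ × (∀ j, A j) × B => z.1 = u₀), p z

/-- Joint marginal pmf of `(U₀, U_j)`. -/
def pr0j {k : ℕ} {Ω₀ B : Type*} {A : Fin k → Type*}
    [Fintype Ω₀] [Fintype B] [∀ j, Fintype (A j)] [DecidableEq Ω₀]
    [∀ j, DecidableEq (A j)]
    (p : Ω₀ × (∀ j, A j) × B → ℝ) (j : Fin k) (u₀ : Ω₀) (a : A j) : ℝ :=
  ∑ z ∈ Finset.univ.filter
    (fun z : Ω₀ × (∀ j, A j) × B => z.1 = u₀ ∧ z.2.1 j = a), p z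

/-- Joint marginal pmf of `(U₀, U_{k+1})`. -/
def pr0B {k : ℕ} {Ω₀ B : Type*} {A : Fin k → Type*}
    [Fintype Ω₀] [Fintype B] [∀ j, Fintype (A j)] [DecidableEq Ω₀]
    [DecidableEq B]
    (p : Ω₀ × (∀ j, A j) × B → ℝ) (u₀ : Ω₀) (b : B) : ℝ :=
  ∑ z ∈ Finset.univ.filter
    (fun z : Ω₀ × (∀ j, A j) × B => z.1 = u₀ ∧ z.2.2 = b), p z

open Filter Topology

/-!
Fix `S` and let `α = packingRate p δ S`. The single-letter law
`q = p(u₀) ∏_j p(u_j | u₀) p(u_{k+1} | u₀)` factors as `q = exp g · F`, where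
`F = p(u₀, u_S, u_{k+1}) ∏_{j ∉ S} p(u_j | u₀)` is again a pmf and the log-likelihood ratio `g`
involves only the coordinates `0`, `S` and `k+1`. On the weakly typical set `∑ᵢ g(zᵢ) ≤ -nα`,
so changing measure from `Fⁿ` to `qⁿ` shows that a single message tuple `m` produces such a
tuple with probability at most `e^{-nα}`. That event depends on `m` only through `(m_j)_{j ∈ S}`,
so a union bound over at most `∏_{j ∈ S} M_j ≤ e^{n ∑_S R_j}` tuples bounds the covering
probability by `e^{n (∑_S R_j - α)}`, which cannot tend to `1` unless `∑_S R_j ≥ α`.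
-/

section FiniteProbability

variable {X Z : Type*} [Fintype X] [Fintype Z]

theorem sum_filter_le_sum_sum_filter {ι : Type*} (μ : X → ℝ) (hμ : ∀ x, 0 ≤ μ x)
    (Q : X → Prop) [DecidablePred Q] (I : Finset ι) (E : ι → X → Prop)
    [∀ i, DecidablePred (E i)] (hQE : ∀ x, Q x → ∃ i ∈ I, E i x) :
    ∑ x ∈ univ.filter Q, μ x ≤ ∑ i ∈ I, ∑ x ∈ univ.filter (E i), μ x := by
  have hterm : ∀ i x, 0 ≤ if E i x then μ x else 0 := fun i x => by
    split_ifs <;> simp [hμ]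
  simp only [Finset.sum_filter]
  rw [Finset.sum_comm]
  refine Finset.sum_le_sum fun x _ => ?_
  split_ifs with hx
  · obtain ⟨i, hi, hEi⟩ := hQE x hx
    calc μ x = if E i x then μ x else 0 := (if_pos hEi).symm
      _ ≤ _ := Finset.single_le_sum (f := fun i => if E i x then μ x else 0)
          (fun i _ => hterm i x) hi
  · exact Finset.sum_nonneg fun i _ => hterm i x

theorem sum_filter_sum_le_prod_exp_mul_le_exp (F g : Z → ℝ) (hF : ∀ z, 0 ≤ F z)
    (hF1 : ∑ z, F z = 1) (n : ℕ) (a : ℝ) :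
    ∑ w ∈ univ.filter (fun w : Fin n → Z => ∑ i, g (w i) ≤ a),
      ∏ i, Real.exp (g (w i)) * F (w i) ≤ Real.exp a := by
  have hprodF : ∀ w : Fin n → Z, 0 ≤ ∏ i, F (w i) := fun w =>
    Finset.prod_nonneg fun i _ => hF _
  calc _ = ∑ w ∈ univ.filter (fun w : Fin n → Z => ∑ i, g (w i) ≤ a),
        Real.exp (∑ i, g (w i)) * ∏ i, F (w i) := by
        simp only [Finset.prod_mul_distrib, Real.exp_sum]
    _ ≤ ∑ w ∈ univ.filter (fun w : Fin n → Z => ∑ i, g (w i) ≤ a),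
        Real.exp a * ∏ i, F (w i) := Finset.sum_le_sum fun w hw =>
          mul_le_mul_of_nonneg_right (Real.exp_le_exp.2 (Finset.mem_filter.1 hw).2) (hprodF w)
    _ ≤ ∑ w : Fin n → Z, Real.exp a * ∏ i, F (w i) :=
        Finset.sum_le_sum_of_subset_of_nonneg (Finset.filter_subset _ _) fun w _ _ =>
          mul_nonneg (Real.exp_pos a).le (hprodF w)
    _ = Real.exp a := by rw [← Finset.mul_sum, ← Fintype.sum_pow, hF1, one_pow, mul_one]

theorem sum_filter_comp_le_exp [DecidableEq Z] {n : ℕ} (μ : X → ℝ) (f : X → Fin n → Z)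
    (F g : Z → ℝ) (hF : ∀ z, 0 ≤ F z) (hF1 : ∑ z, F z = 1)
    (hlaw : ∀ w, ∑ x ∈ univ.filter (fun x => f x = w), μ x =
      ∏ i, Real.exp (g (w i)) * F (w i))
    (a : ℝ) :
    ∑ x ∈ univ.filter (fun x => ∑ i, g (f x i) ≤ a), μ x ≤ Real.exp a := by
  rw [← Finset.sum_fiberwise_of_maps_to (t := univ.filter (fun w : Fin n → Z => ∑ i, g (w i) ≤ a))
    (g := f) (fun x hx => by simpa using hx)]
  refine le_of_eq_of_le (Finset.sum_congr rfl fun w hw => ?_)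
    (sum_filter_sum_le_prod_exp_mul_le_exp F g hF hF1 n a)
  rw [← hlaw, Finset.filter_filter]
  refine Finset.sum_congr (Finset.ext fun x => ?_) fun _ _ => rfl
  simp only [Finset.mem_filter, Finset.mem_univ, true_and, and_iff_right_iff_imp]
  rintro rfl
  simpa using hw

end FiniteProbability

theorem nonneg_of_tendsto_one_of_le_exp {f : ℕ → ℝ} {c : ℝ}
    (hf : Tendsto f atTop (𝓝 1)) (hle : ∀ᶠ n : ℕ in atTop, f n ≤ Real.exp (n * c)) :
    0 ≤ c := by
  by_contra! hc
  have hexp : Tendsto (fun n : ℕ => Real.exp (n * c)) atTop (𝓝 0) :=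
    Real.tendsto_exp_atBot.comp (tendsto_natCast_atTop_atTop.atTop_mul_const_of_neg hc)
  have := le_of_tendsto_of_tendsto hf hexp hle
  norm_num at this

theorem card_piFinset_ite_univ_singleton {ι : Type*} [Fintype ι] [DecidableEq ι]
    {β : ι → Type*} [∀ i, Fintype (β i)] [∀ i, DecidableEq (β i)] (S : Finset ι)
    (x : ∀ i, β i) :
    (Fintype.piFinset fun i => if i ∈ S then univ else {x i}).card =
      ∏ i ∈ S, Fintype.card (β i) := by
  simp [Fintype.card_piFinset, apply_ite Finset.card, Finset.prod_ite_mem]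

theorem sum_filter_forall_mem_eq_prod_compl {ι : Type*} [Fintype ι] [DecidableEq ι]
    {β : ι → Type*} [∀ i, Fintype (β i)] [∀ i, DecidableEq (β i)] (S : Finset ι)
    (x : ∀ i, β i) (r : ∀ i, β i → ℝ) (hr : ∀ i ∉ S, ∑ b, r i b = 1) :
    ∑ a ∈ univ.filter (fun a : ∀ i, β i => ∀ i ∈ S, a i = x i), ∏ i ∈ Sᶜ, r i (a i) = 1 := by
  have hpi : univ.filter (fun a : ∀ i, β i => ∀ i ∈ S, a i = x i) =
      Fintype.piFinset fun i => if i ∈ S then {x i} else univ := by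
    ext a
    simp only [Finset.mem_filter, Finset.mem_univ, true_and, Fintype.mem_piFinset]
    refine forall_congr' fun i => ?_
    split_ifs with hi <;> simp [hi]
  have hcompl : ∀ a : ∀ i, β i,
      ∏ i ∈ Sᶜ, r i (a i) = ∏ i, if i ∈ S then 1 else r i (a i) := by
    intro a
    rw [Finset.prod_ite, Finset.prod_const_one, one_mul]
    congr 1
    ext i
    simp
  rw [hpi, Finset.sum_congr rfl fun a _ => hcompl a,
    ← Finset.prod_univ_sum _ fun i b => if i ∈ S then 1 else r i b]
  refine Finset.prod_eq_one fun i _ => ?_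
  split_ifs with hi
  · simp
  · exact hr i hi

theorem sum_pr0j {k : ℕ} {Ω₀ B : Type*} {A : Fin k → Type*}
    [Fintype Ω₀] [Fintype B] [∀ j, Fintype (A j)] [DecidableEq Ω₀] [∀ j, DecidableEq (A j)]
    (p : Ω₀ × (∀ j, A j) × B → ℝ) (j : Fin k) (u : Ω₀) :
    ∑ a : A j, pr0j p j u a = pr0 p u := by
  unfold pr0j pr0
  rw [← Finset.sum_fiberwise (s := univ.filter fun z : Ω₀ × (∀ j, A j) × B => z.1 = u)
    (g := fun z => z.2.1 j)]
  exact Finset.sum_congr rfl fun a _ => by rw [Finset.filter_filter]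

section Packing

variable {k : ℕ} {Ω₀ B : Type*} {A : Fin k → Type*}
    [Fintype Ω₀] [Fintype B] [∀ j, Fintype (A j)]
    [DecidableEq Ω₀] [DecidableEq B] [∀ j, DecidableEq (A j)]
    (p : Ω₀ × (∀ j, A j) × B → ℝ)

theorem wMarg_pos (hp : ∀ z, 0 < p z) (b0 : Bool) (S : Finset (Fin k)) (bB : Bool)
    (z : Ω₀ × (∀ j, A j) × B) : 0 < wMarg p b0 S bB z :=
  Finset.sum_pos (fun w _ => hp w) ⟨z, by simp⟩

theorem wMarg_congr {b0 : Bool} {S : Finset (Fin k)} {bB : Bool}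
    {z z' : Ω₀ × (∀ j, A j) × B} (h0 : z.1 = z'.1) (hS : ∀ j ∈ S, z.2.1 j = z'.2.1 j)
    (hB : z.2.2 = z'.2.2) :
    wMarg p b0 S bB z = wMarg p b0 S bB z' := by
  unfold wMarg
  congr 1
  ext w
  simp +contextual [h0, hB, hS]

theorem wMarg_true_empty_false (z : Ω₀ × (∀ j, A j) × B) :
    wMarg p true ∅ false z = pr0 p z.1 := by
  simp [wMarg, pr0]

theorem wMarg_true_singleton_false (j : Fin k) (z : Ω₀ × (∀ j, A j) × B) :
    wMarg p true {j} false z = pr0j p j z.1 (z.2.1 j) := by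
  simp [wMarg, pr0j]

theorem wMarg_true_empty_true (z : Ω₀ × (∀ j, A j) × B) :
    wMarg p true ∅ true z = pr0B p z.1 z.2.2 := by
  simp [wMarg, pr0B]

noncomputable def letterLaw (z : Ω₀ × (∀ j, A j) × B) : ℝ :=
  pr0 p z.1 * (∏ j, pr0j p j z.1 (z.2.1 j) / pr0 p z.1) * (pr0B p z.1 z.2.2 / pr0 p z.1)

/-- `p(u₀, u_S, u_{k+1}) ∏_{j ∉ S} p(u_j | u₀)`. -/
noncomputable def resampledLaw (S : Finset (Fin k)) (z : Ω₀ × (∀ j, A j) × B) : ℝ :=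
  wMarg p true S true z * ∏ j ∈ Sᶜ, pr0j p j z.1 (z.2.1 j) / pr0 p z.1

noncomputable def logLikRatio (S : Finset (Fin k)) (z : Ω₀ × (∀ j, A j) × B) : ℝ :=
  ∑ j ∈ S, Real.log (wMarg p true {j} false z) + Real.log (wMarg p true ∅ true z) -
    S.card * Real.log (wMarg p true ∅ false z) - Real.log (wMarg p true S true z)

/-- The exponent `α_S / n`. -/
noncomputable def packingRate (δ : ℝ) (S : Finset (Fin k)) : ℝ :=
  (∑ j ∈ S, (wEnt p true {j} false - wEnt p true ∅ false)) -
    (wEnt p true S true - wEnt p true ∅ true) - 2 * ((S.card : ℝ) + 1) * δ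

theorem resampledLaw_nonneg (hp : ∀ z, 0 < p z) (S : Finset (Fin k))
    (z : Ω₀ × (∀ j, A j) × B) : 0 ≤ resampledLaw p S z :=
  mul_nonneg (wMarg_pos p hp _ _ _ z).le <| Finset.prod_nonneg fun _ _ =>
    div_nonneg (Finset.sum_nonneg fun w _ => (hp w).le) (Finset.sum_nonneg fun w _ => (hp w).le)

theorem sum_resampledLaw (hp : ∀ z, 0 < p z) (hp1 : ∑ z, p z = 1) (S : Finset (Fin k)) :
    ∑ z, resampledLaw p S z = 1 := by
  have hfiber : ∀ w : Ω₀ × (∀ j, A j) × B,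
      ∑ z ∈ univ.filter (fun z : Ω₀ × (∀ j, A j) × B =>
          (true = true → w.1 = z.1) ∧ (∀ j ∈ S, w.2.1 j = z.2.1 j) ∧
            (true = true → w.2.2 = z.2.2)),
        ∏ j ∈ Sᶜ, pr0j p j z.1 (z.2.1 j) / pr0 p z.1 = 1 := by
    intro w
    have hpr0 : pr0 p w.1 ≠ 0 := by
      rw [← wMarg_true_empty_false]
      exact (wMarg_pos p hp _ _ _ w).ne'
    rw [← sum_filter_forall_mem_eq_prod_compl S w.2.1 (fun j a => pr0j p j w.1 a / pr0 p w.1)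
      fun j _ => by rw [← Finset.sum_div, sum_pr0j, div_self hpr0]]
    refine Finset.sum_nbij' (fun z => z.2.1) (fun a => (w.1, a, w.2.2)) ?_ ?_ ?_ ?_ ?_ <;>
      simp +contextual
  calc ∑ z, resampledLaw p S z
      = ∑ w, p w * ∑ z ∈ univ.filter (fun z : Ω₀ × (∀ j, A j) × B =>
          (true = true → w.1 = z.1) ∧ (∀ j ∈ S, w.2.1 j = z.2.1 j) ∧
            (true = true → w.2.2 = z.2.2)),
        ∏ j ∈ Sᶜ, pr0j p j z.1 (z.2.1 j) / pr0 p z.1 := by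
        simp only [resampledLaw, wMarg, Finset.sum_mul, Finset.mul_sum, Finset.sum_filter,
          ite_mul, zero_mul, mul_ite, mul_zero]
        exact Finset.sum_comm
    _ = ∑ w, p w := Finset.sum_congr rfl fun w _ => by rw [hfiber w, mul_one]
    _ = 1 := hp1

theorem letterLaw_eq_exp_mul_resampledLaw (hp : ∀ z, 0 < p z) (S : Finset (Fin k))
    (z : Ω₀ × (∀ j, A j) × B) :
    letterLaw p z = Real.exp (logLikRatio p S z) * resampledLaw p S z := by
  have hexp : Real.exp (logLikRatio p S z) = (∏ j ∈ S, pr0j p j z.1 (z.2.1 j)) *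
      pr0B p z.1 z.2.2 / (pr0 p z.1 ^ S.card * wMarg p true S true z) := by
    simp only [logLikRatio, Real.exp_sub, Real.exp_add, Real.exp_sum, Real.exp_nat_mul,
      fun b0 S bB => Real.exp_log (wMarg_pos p hp b0 S bB z)]
    simp only [wMarg_true_empty_false, wMarg_true_singleton_false, wMarg_true_empty_true]
    field_simp
  have hSB := (wMarg_pos p hp true S true z).ne'
  have h0 : pr0 p z.1 ≠ 0 := by
    rw [← wMarg_true_empty_false]
    exact (wMarg_pos p hp _ _ _ z).ne'
  rw [hexp, resampledLaw, letterLaw, ← Finset.prod_mul_prod_compl S, Finset.prod_div_distrib,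
    Finset.prod_const]
  field_simp

theorem logLikRatio_congr (S : Finset (Fin k)) {z z' : Ω₀ × (∀ j, A j) × B}
    (h0 : z.1 = z'.1) (hS : ∀ j ∈ S, z.2.1 j = z'.2.1 j) (hB : z.2.2 = z'.2.2) :
    logLikRatio p S z = logLikRatio p S z' := by
  have hsub : ∀ b0 S' bB, S' ⊆ S → wMarg p b0 S' bB z = wMarg p b0 S' bB z' :=
    fun _ _ _ hS' => wMarg_congr p h0 (fun j hj => hS j (hS' hj)) hB
  unfold logLikRatio
  rw [hsub _ _ _ (Finset.empty_subset S), hsub _ _ _ (Finset.empty_subset S),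
    hsub _ _ _ subset_rfl,
    Finset.sum_congr rfl fun j hj => by rw [hsub _ _ _ (Finset.singleton_subset_iff.2 hj)]]

theorem abs_sum_log_wMarg_add_le_of_mem_wTypical {n : ℕ} (hn : 0 < n) {δ : ℝ}
    {w : Fin n → Ω₀ × (∀ j, A j) × B} (hw : w ∈ wTypical p n δ) (S : Finset (Fin k))
    (bB : Bool) :
    |∑ i, Real.log (wMarg p true S bB (w i)) + n * wEnt p true S bB| ≤ n * δ := by
  have hn' : (0 : ℝ) < n := Nat.cast_pos.2 hn
  have h : ∑ i, Real.log (wMarg p true S bB (w i)) + n * wEnt p true S bB =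
      -(n * (-(1 / (n : ℝ)) * ∑ i, Real.log (wMarg p true S bB (w i)) - wEnt p true S bB)) := by
    field_simp
    ring
  rw [h, abs_neg, abs_mul, abs_of_pos hn']
  exact mul_le_mul_of_nonneg_left (hw true S bB (Or.inl rfl)) hn'.le

theorem sum_logLikRatio_le_of_mem_wTypical {n : ℕ} (hn : 0 < n) {δ : ℝ}
    {w : Fin n → Ω₀ × (∀ j, A j) × B} (hw : w ∈ wTypical p n δ) (S : Finset (Fin k)) :
    ∑ i, logLikRatio p S (w i) ≤ -(n * packingRate p δ S) := by
  have hL := fun S bB => abs_le.1 (abs_sum_log_wMarg_add_le_of_mem_wTypical p hn hw S bB)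
  have hS : ∑ j ∈ S, ∑ i, Real.log (wMarg p true {j} false (w i)) ≤
      ∑ j ∈ S, (n * δ - n * wEnt p true {j} false) :=
    Finset.sum_le_sum fun j _ => by linarith [(hL {j} false).2]
  have h0 : -(S.card * ∑ i, Real.log (wMarg p true ∅ false (w i))) ≤
      S.card * (n * δ + n * wEnt p true ∅ false) := by
    rw [← mul_neg]
    exact mul_le_mul_of_nonneg_left (by linarith [(hL ∅ false).1]) (Nat.cast_nonneg _)
  have hsum : ∑ i, logLikRatio p S (w i) =
      ∑ j ∈ S, ∑ i, Real.log (wMarg p true {j} false (w i)) +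
        ∑ i, Real.log (wMarg p true ∅ true (w i)) -
        S.card * ∑ i, Real.log (wMarg p true ∅ false (w i)) -
        ∑ i, Real.log (wMarg p true S true (w i)) := by
    simp only [logLikRatio, Finset.sum_sub_distrib, Finset.sum_add_distrib, ← Finset.mul_sum]
    rw [Finset.sum_comm]
  rw [hsum, packingRate]
  simp only [Finset.sum_sub_distrib, Finset.sum_const, nsmul_eq_mul, ← Finset.mul_sum] at hS ⊢
  linear_combination hS + h0 + (hL ∅ true).2 + (hL S true).1

end Packing

section Codebook

variable {k : ℕ} {Ω₀ B : Type*} {A : Fin k → Type*} {n : ℕ} {M : Fin k → ℕ}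

def codewordTuple (m : ∀ j, Fin (M j))
    (ω : (Fin n → Ω₀) × (∀ j, Fin (M j) → Fin n → A j) × (Fin n → B)) :
    Fin n → Ω₀ × (∀ j, A j) × B :=
  fun i => (ω.1 i, fun j => ω.2.1 j (m j) i, ω.2.2 i)

theorem codewordTuple_eq_iff {m : ∀ j, Fin (M j)}
    {ω : (Fin n → Ω₀) × (∀ j, Fin (M j) → Fin n → A j) × (Fin n → B)}
    {w : Fin n → Ω₀ × (∀ j, A j) × B} :
    codewordTuple m ω = w ↔ ω.1 = (fun i => (w i).1) ∧
      (∀ j, ω.2.1 j (m j) = fun i => (w i).2.1 j) ∧ ω.2.2 = fun i => (w i).2.2 := by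
  simp only [funext_iff, codewordTuple, Prod.ext_iff, forall_and]
  rw [forall_comm (α := Fin n)]

variable [Fintype Ω₀] [Fintype B] [∀ j, Fintype (A j)]
    [DecidableEq Ω₀] [DecidableEq B] [∀ j, DecidableEq (A j)]
    (p : Ω₀ × (∀ j, A j) × B → ℝ)
    (μ : (Fin n → Ω₀) × (∀ j, Fin (M j) → Fin n → A j) × (Fin n → B) → ℝ)

theorem sum_filter_codewordTuple_eq
    (hlaw : ∀ (m : ∀ j, Fin (M j)) (u : Fin n → Ω₀) (x : ∀ j, Fin n → A j) (v : Fin n → B),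
      ∑ ω ∈ univ.filter (fun ω : (Fin n → Ω₀) × (∀ j, Fin (M j) → Fin n → A j) × (Fin n → B) =>
          ω.1 = u ∧ (∀ j, ω.2.1 j (m j) = x j) ∧ ω.2.2 = v), μ ω
        = ∏ i, letterLaw p (u i, fun j => x j i, v i))
    (m : ∀ j, Fin (M j)) (w : Fin n → Ω₀ × (∀ j, A j) × B) :
    ∑ ω ∈ univ.filter (fun ω => codewordTuple m ω = w), μ ω = ∏ i, letterLaw p (w i) := by
  simpa only [codewordTuple_eq_iff] using
    hlaw m (fun i => (w i).1) (fun j i => (w i).2.1 j) (fun i => (w i).2.2)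

theorem exists_mem_piFinset_sum_logLikRatio_le (hn : 0 < n) (m₀ : ∀ j, Fin (M j)) {δ : ℝ}
    {m : ∀ j, Fin (M j)} {ω : (Fin n → Ω₀) × (∀ j, Fin (M j) → Fin n → A j) × (Fin n → B)}
    (hm : codewordTuple m ω ∈ wTypical p n δ) (S : Finset (Fin k)) :
    ∃ m' ∈ Fintype.piFinset fun j => if j ∈ S then univ else {m₀ j},
      ∑ i, logLikRatio p S (codewordTuple m' ω i) ≤ -(n * packingRate p δ S) := by
  refine ⟨fun j => if j ∈ S then m j else m₀ j, ?_, ?_⟩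
  · simp only [Fintype.mem_piFinset]
    intro j
    split_ifs <;> simp
  · calc ∑ i, logLikRatio p S (codewordTuple (fun j => if j ∈ S then m j else m₀ j) ω i)
        = ∑ i, logLikRatio p S (codewordTuple m ω i) :=
          Finset.sum_congr rfl fun i _ => logLikRatio_congr p S rfl
            (fun j hj => by simp [codewordTuple, hj]) rfl
      _ ≤ -(n * packingRate p δ S) := sum_logLikRatio_le_of_mem_wTypical p hn hm S

open scoped Classical in
theorem sum_filter_exists_codewordTuple_mem_wTypical_le (hp : ∀ z, 0 < p z)
    (hp1 : ∑ z, p z = 1) (hμ0 : ∀ ω, 0 ≤ μ ω)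
    (hlaw : ∀ (m : ∀ j, Fin (M j)) (u : Fin n → Ω₀) (x : ∀ j, Fin n → A j) (v : Fin n → B),
      ∑ ω ∈ univ.filter (fun ω : (Fin n → Ω₀) × (∀ j, Fin (M j) → Fin n → A j) × (Fin n → B) =>
          ω.1 = u ∧ (∀ j, ω.2.1 j (m j) = x j) ∧ ω.2.2 = v), μ ω
        = ∏ i, letterLaw p (u i, fun j => x j i, v i))
    (R : Fin k → ℝ) (hM : ∀ j, (M j : ℝ) ≤ Real.exp (n * R j)) (hn : 0 < n) (δ : ℝ)
    (S : Finset (Fin k)) :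
    ∑ ω ∈ univ.filter (fun ω => ∃ m, codewordTuple m ω ∈ wTypical p n δ), μ ω ≤
      Real.exp (n * (∑ j ∈ S, R j - packingRate p δ S)) := by
  rcases isEmpty_or_nonempty (∀ j, Fin (M j)) with hempty | ⟨⟨m₀⟩⟩
  · simp only [IsEmpty.exists_iff, Finset.filter_false, Finset.sum_empty]
    exact (Real.exp_pos _).le
  set reps := Fintype.piFinset fun j => if j ∈ S then univ else {m₀ j}
  set a := -(n * packingRate p δ S)
  have hcover : ∀ ω, (∃ m, codewordTuple m ω ∈ wTypical p n δ) →
      ∃ m ∈ reps, ∑ i, logLikRatio p S (codewordTuple m ω i) ≤ a := fun ω ⟨m, hm⟩ =>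
    exists_mem_piFinset_sum_logLikRatio_le p hn m₀ hm S
  have hevent : ∀ m, ∑ ω ∈ univ.filter
      (fun ω => ∑ i, logLikRatio p S (codewordTuple m ω i) ≤ a), μ ω ≤ Real.exp a := fun m =>
    sum_filter_comp_le_exp μ (codewordTuple m) (resampledLaw p S) (logLikRatio p S)
      (resampledLaw_nonneg p hp S) (sum_resampledLaw p hp hp1 S)
      (fun w => by simp only [sum_filter_codewordTuple_eq p μ hlaw,
        letterLaw_eq_exp_mul_resampledLaw p hp S]) a
  have hcard : (reps.card : ℝ) ≤ Real.exp (n * ∑ j ∈ S, R j) := by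
    rw [card_piFinset_ite_univ_singleton, Nat.cast_prod, Finset.mul_sum, Real.exp_sum]
    exact Finset.prod_le_prod (fun j _ => Nat.cast_nonneg _) fun j _ => by
      simpa using hM j
  calc _ ≤ ∑ m ∈ reps, ∑ ω ∈ univ.filter
          (fun ω => ∑ i, logLikRatio p S (codewordTuple m ω i) ≤ a), μ ω :=
        sum_filter_le_sum_sum_filter μ hμ0 _ reps _ hcover
    _ ≤ ∑ m ∈ reps, Real.exp a := Finset.sum_le_sum fun m _ => hevent m
    _ = reps.card * Real.exp a := by rw [Finset.sum_const, nsmul_eq_mul]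
    _ ≤ Real.exp (n * ∑ j ∈ S, R j) * Real.exp a :=
        mul_le_mul_of_nonneg_right hcard (Real.exp_pos a).le
    _ = Real.exp (n * (∑ j ∈ S, R j - packingRate p δ S)) := by
        rw [← Real.exp_add, mul_sub, sub_eq_add_neg]

end Codebook

open scoped Classical in
theorem covering_stmt19_general
    {k : ℕ} {Ω₀ B : Type*} {A : Fin k → Type*}
    [Fintype Ω₀] [Fintype B] [∀ j, Fintype (A j)]
    [DecidableEq Ω₀] [DecidableEq B] [∀ j, DecidableEq (A j)]
    (p : Ω₀ × (∀ j, A j) × B → ℝ)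
    (hp : ∀ z, 0 < p z) (hp1 : ∑ z, p z = 1)
    (δ : ℝ)
    (R : Fin k → ℝ)
    (M : ℕ → Fin k → ℕ)
    (hM : ∀ (n : ℕ) (j : Fin k), (M n j : ℝ) ≤ Real.exp ((n : ℝ) * R j))
    (μ : ∀ n : ℕ,
      (Fin n → Ω₀) × (∀ j, Fin (M n j) → Fin n → A j) × (Fin n → B) → ℝ)
    (hμ0 : ∀ n ω, 0 ≤ μ n ω)
    -- each `m`-indexed tuple is i.i.d. across time with law
    -- `p(u₀)·∏_j p(u_j|u₀)·p(u_{k+1}|u₀)`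
    (hlaw : ∀ (n : ℕ) (m : ∀ j, Fin (M n j)) (u : Fin n → Ω₀)
        (x : ∀ j, Fin n → A j) (v : Fin n → B),
      ∑ ω ∈ Finset.univ.filter
          (fun ω : (Fin n → Ω₀) × (∀ j, Fin (M n j) → Fin n → A j) × (Fin n → B) =>
            ω.1 = u ∧ (∀ j, ω.2.1 j (m j) = x j) ∧ ω.2.2 = v), μ n ω
        = ∏ i, (pr0 p (u i) * (∏ j, pr0j p j (u i) (x j i) / pr0 p (u i)) *
            (pr0B p (u i) (v i) / pr0 p (u i))))
    -- the covering probability tends to one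
    (hcov : Filter.Tendsto (fun n : ℕ =>
      ∑ ω ∈ Finset.univ.filter
          (fun ω : (Fin n → Ω₀) × (∀ j, Fin (M n j) → Fin n → A j) × (Fin n → B) =>
            ∃ m : ∀ j, Fin (M n j),
              (fun i => ((ω.1 i, fun j => ω.2.1 j (m j) i, ω.2.2 i) :
                Ω₀ × (∀ j, A j) × B)) ∈ wTypical p n δ), μ n ω)
      Filter.atTop (nhds 1)) :
    ∀ S : Finset (Fin k), S.Nonempty →
      (∑ j ∈ S, R j) ≥
        (∑ j ∈ S, (wEnt p true {j} false - wEnt p true ∅ false)) -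
          (wEnt p true S true - wEnt p true ∅ true) -
          2 * ((S.card : ℝ) + 1) * δ := by
  intro S _
  have hrate := nonneg_of_tendsto_one_of_le_exp hcov <|
    (eventually_gt_atTop 0).mono fun n hn =>
      sum_filter_exists_codewordTuple_mem_wTypical_le p (μ n) hp hp1 (hμ0 n) (hlaw n) R (hM n)
        hn δ S
  exact sub_nonneg.1 hrate

open scoped Classical in
/-- **Multivariate covering lemma (converse / packing part, weak
typicality).**  Let `p(u₀,…,u_{k+1})` be a full-support joint pmf on finite
alphabets and `δ > 0`.  Suppose `M_n j ≤ e^{nR_j}` for all `j`, and for each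
`m` the tuple `(U₀ⁿ, U₁ⁿ(m₁),…,U_kⁿ(m_k), U_{k+1}ⁿ)` consists of `n` i.i.d.
copies of a tuple with law `p(u₀)·∏_j p(u_j|u₀)·p(u_{k+1}|u₀)` (no joint
independence across `m` is needed).  If
`P(∃ m : (U₀ⁿ, U₁ⁿ(m₁),…,U_kⁿ(m_k), U_{k+1}ⁿ) ∈ A_δ^{(n)}) → 1`, then for
every nonempty `S ⊆ [k]`,
`∑_{j∈S} R_j ≥ ∑_{j∈S} H(U_j|U₀) − H(U_S|U₀,U_{k+1}) − 2(|S|+1)δ`. -/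
theorem covering_stmt19
    {k : ℕ} {Ω₀ B : Type*} {A : Fin k → Type*}
    [Fintype Ω₀] [Fintype B] [∀ j, Fintype (A j)]
    [DecidableEq Ω₀] [DecidableEq B] [∀ j, DecidableEq (A j)]
    (p : Ω₀ × (∀ j, A j) × B → ℝ)
    (hp : ∀ z, 0 < p z) (hp1 : ∑ z, p z = 1)
    (δ : ℝ) (hδ : 0 < δ)
    (R : Fin k → ℝ)
    (M : ℕ → Fin k → ℕ)
    (hM : ∀ (n : ℕ) (j : Fin k), (M n j : ℝ) ≤ Real.exp ((n : ℝ) * R j))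
    (μ : ∀ n : ℕ,
      (Fin n → Ω₀) × (∀ j, Fin (M n j) → Fin n → A j) × (Fin n → B) → ℝ)
    (hμ0 : ∀ n ω, 0 ≤ μ n ω) (hμ1 : ∀ n, ∑ ω, μ n ω = 1)
    -- each `m`-indexed tuple is i.i.d. across time with law
    -- `p(u₀)·∏_j p(u_j|u₀)·p(u_{k+1}|u₀)`
    (hlaw : ∀ (n : ℕ) (m : ∀ j, Fin (M n j)) (u : Fin n → Ω₀)
        (x : ∀ j, Fin n → A j) (v : Fin n → B),
      ∑ ω ∈ Finset.univ.filter
          (fun ω : (Fin n → Ω₀) × (∀ j, Fin (M n j) → Fin n → A j) × (Fin n → B) =>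
            ω.1 = u ∧ (∀ j, ω.2.1 j (m j) = x j) ∧ ω.2.2 = v), μ n ω
        = ∏ i, (pr0 p (u i) * (∏ j, pr0j p j (u i) (x j i) / pr0 p (u i)) *
            (pr0B p (u i) (v i) / pr0 p (u i))))
    -- the covering probability tends to one
    (hcov : Filter.Tendsto (fun n : ℕ =>
      ∑ ω ∈ Finset.univ.filter
          (fun ω : (Fin n → Ω₀) × (∀ j, Fin (M n j) → Fin n → A j) × (Fin n → B) =>
            ∃ m : ∀ j, Fin (M n j),
              (fun i => ((ω.1 i, fun j => ω.2.1 j (m j) i, ω.2.2 i) :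
                Ω₀ × (∀ j, A j) × B)) ∈ wTypical p n δ), μ n ω)
      Filter.atTop (nhds 1)) :
    ∀ S : Finset (Fin k), S.Nonempty →
      (∑ j ∈ S, R j) ≥
        (∑ j ∈ S, (wEnt p true {j} false - wEnt p true ∅ false)) -
          (wEnt p true S true - wEnt p true ∅ true) -
          2 * ((S.card : ℝ) + 1) * δ :=
  covering_stmt19_general p hp hp1 δ R M hM μ hμ0 hlaw hcov
end
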